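/- Existence of preferred extensions: Let F = ⟨A, →⟩ be an AAF with n ≥ ℓ ≥ m. Then every ℓmn-complete extension of F is contained in some ℓmn-preferred extension of F (a ⊆-maximal ℓmn-complete extension), and F has at least one ℓmn-preferred extension. -/
import Mathlib


open Set

variable {A : Type*}

/-- Graded neutrality function `N_ℓ`: arguments not attacked by `ℓ` distinct members of `E`. -/
def gradedNeutrality (att : A → A → Prop) (ℓ : ℕ) (E : Set A) : Set A :=
  {a | ¬ ∃ B : Finset A, B.card = ℓ ∧ (↑B : Set A) ⊆ E ∧ ∀ b ∈ B, att b a}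

/-- Graded defense function `D_n^m = N_m ∘ N_n`. -/
def gradedDefense (att : A → A → Prop) (m n : ℕ) (E : Set A) : Set A :=
  gradedNeutrality att m (gradedNeutrality att n E)

/-- `E` is ℓ-conflict-free. -/
def IsConflictFree (att : A → A → Prop) (ℓ : ℕ) (E : Set A) : Prop :=
  E ⊆ gradedNeutrality att ℓ E

/-- `E` is ℓmn-admissible. -/
def IsAdmissible (att : A → A → Prop) (ℓ m n : ℕ) (E : Set A) : Prop :=
  E ⊆ gradedNeutrality att ℓ E ∧ E ⊆ gradedDefense att m n E

/-- `E` is an ℓmn-complete extension. -/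
def IsCompleteExt (att : A → A → Prop) (ℓ m n : ℕ) (E : Set A) : Prop :=
  E ⊆ gradedNeutrality att ℓ E ∧ E = gradedDefense att m n E

/-- `E` is an ℓmn-stable extension. -/
def IsStableExt (att : A → A → Prop) (ℓ m n : ℕ) (E : Set A) : Prop :=
  E = gradedNeutrality att n E ∧ E = gradedNeutrality att m E ∧
    E ⊆ gradedNeutrality att ℓ E

/-- The AAF is finitary: every argument has finitely many attackers. -/
def IsFinitary (att : A → A → Prop) : Prop :=
  ∀ a : A, {b | att b a}.Finite

/-- `E_η^+`: arguments attacked by `η` distinct members of `E`. -/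
def rangePlus (att : A → A → Prop) (η : ℕ) (E : Set A) : Set A :=
  {a | ∃ B : Finset A, B.card = η ∧ (↑B : Set A) ⊆ E ∧ ∀ b ∈ B, att b a}

/-- The range `E ∪ E_η^+` of `E`. -/
def rangeOf (att : A → A → Prop) (η : ℕ) (E : Set A) : Set A :=
  E ∪ rangePlus att η E

/-- Reduced meet of the family `X` modulo the ultrafilter `D`. -/
def reducedMeet {I : Type*} (D : Ultrafilter I) (X : I → Set A) : Set A :=
  {a | {i | a ∈ X i} ∈ D}

/-- `L` is the least fixed point of `f` containing `E`. -/
def IsLfpOver (f : Set A → Set A) (E L : Set A) : Prop :=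
  f L = L ∧ E ⊆ L ∧ ∀ L', f L' = L' → E ⊆ L' → L ⊆ L'

/-- `r` is well-founded on `S`: there is no infinite `r`-decreasing sequence in `S`. -/
def WellFoundedOnSet (r : A → A → Prop) (S : Set A) : Prop :=
  ¬ ∃ f : ℕ → A, (∀ i, f i ∈ S) ∧ ∀ i, r (f (i + 1)) (f i)

section Aux

variable {A : Type*} {att : A → A → Prop}

lemma neut_anti {E F : Set A} (h : E ⊆ F) (ℓ : ℕ) :
    gradedNeutrality att ℓ F ⊆ gradedNeutrality att ℓ E := by
  intro a ha ⟨B, hc, hs, hatt⟩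
  exact ha ⟨B, hc, hs.trans h, hatt⟩

lemma neut_card {E : Set A} {ℓ n : ℕ} (h : ℓ ≤ n) :
    gradedNeutrality att ℓ E ⊆ gradedNeutrality att n E := by
  intro a ha ⟨B, hc, hs, hatt⟩
  obtain ⟨B', hB's, hB'c⟩ := Finset.exists_subset_card_eq (n := ℓ) (hc ▸ h)
  exact ha ⟨B', hB'c, (Finset.coe_subset.2 hB's).trans hs, fun b hb => hatt b (hB's hb)⟩

lemma defense_mono {E F : Set A} (h : E ⊆ F) (m n : ℕ) :
    gradedDefense att m n E ⊆ gradedDefense att m n F :=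
  neut_anti (neut_anti h n) m

lemma chain_finset_subset {c : Set (Set A)} (hc : IsChain (· ⊆ ·) c)
    (hne : c.Nonempty) (B : Finset A) (hB : (↑B : Set A) ⊆ ⋃₀ c) :
    ∃ s ∈ c, (↑B : Set A) ⊆ s := by
  classical
  induction B using Finset.induction with
  | empty => exact ⟨hne.choose, hne.choose_spec, by simp⟩
  | @insert x B hx ih =>
    obtain ⟨s, hs, hBs⟩ := ih (fun y hy => hB (by simp [Set.mem_insert_iff]; right; exact hy))
    obtain ⟨t, ht, hxt⟩ := hB (Finset.mem_coe.2 (Finset.mem_insert_self x B))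
    rcases eq_or_ne s t with rfl | hst
    · exact ⟨s, hs, by simpa [Set.insert_subset_iff] using ⟨hxt, hBs⟩⟩
    · rcases hc hs ht hst with h1 | h1
      · exact ⟨t, ht, by simpa [Set.insert_subset_iff] using ⟨hxt, hBs.trans h1⟩⟩
      · exact ⟨s, hs, by simpa [Set.insert_subset_iff] using ⟨h1 hxt, hBs⟩⟩

lemma adm_defense {E : Set A} {ℓ m n : ℕ} (hml : m ≤ ℓ) (hln : ℓ ≤ n)
    (hE : IsAdmissible att ℓ m n E) : IsAdmissible att ℓ m n (gradedDefense att m n E) := by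
  obtain ⟨hcf, hdef⟩ := hE
  constructor
  · -- conflict-freeness of D(E)
    intro a ha ⟨B, hBc, hBs, hBatt⟩
    -- some b ∈ B is not in N_n(E)
    by_cases hall : (↑B : Set A) ⊆ gradedNeutrality att n E
    · obtain ⟨B', hB's, hB'c⟩ := Finset.exists_subset_card_eq (n := m) (hBc ▸ hml)
      exact ha ⟨B', hB'c, (Finset.coe_subset.2 hB's).trans hall,
        fun b hb => hBatt b (hB's hb)⟩
    · obtain ⟨b, hbB, hbn⟩ := Set.not_subset.1 hall
      simp only [gradedNeutrality, Set.mem_setOf_eq, not_not] at hbn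
      obtain ⟨C, hCc, hCs, hCatt⟩ := hbn
      have hbD : b ∈ gradedDefense att m n E := hBs hbB
      obtain ⟨C', hC's, hC'c⟩ := Finset.exists_subset_card_eq (n := m)
        (hCc ▸ (hml.trans hln))
      exact hbD ⟨C', hC'c,
        (Finset.coe_subset.2 hC's).trans (hCs.trans (hcf.trans (neut_card hln))),
        fun x hx => hCatt x (hC's hx)⟩
  · exact defense_mono hdef m n

end Aux
section Main

variable {A : Type*} {att : A → A → Prop}

lemma exists_max_adm {ℓ m n : ℕ} (hml : m ≤ ℓ) (hln : ℓ ≤ n)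
    {E : Set A} (hE : IsAdmissible att ℓ m n E) :
    ∃ P : Set A, (IsCompleteExt att ℓ m n P ∧
      ∀ P' : Set A, IsCompleteExt att ℓ m n P' → P ⊆ P' → P = P') ∧ E ⊆ P := by
  obtain ⟨M, hEM, hMmax⟩ := zorn_subset_nonempty {F : Set A | IsAdmissible att ℓ m n F}
    (fun c hcS hchain hcne => by
      refine ⟨⋃₀ c, ⟨?_, ?_⟩, fun s hs => Set.subset_sUnion_of_mem hs⟩
      · rintro a ⟨t, htc, hat⟩ ⟨B, hBc, hBs, hBatt⟩
        obtain ⟨s, hsc, hBsub⟩ := chain_finset_subset hchain hcne B hBs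
        rcases eq_or_ne s t with rfl | hst
        · exact (hcS hsc).1 hat ⟨B, hBc, hBsub, hBatt⟩
        · rcases hchain hsc htc hst with h1 | h1
          · exact (hcS htc).1 hat ⟨B, hBc, hBsub.trans h1, hBatt⟩
          · exact (hcS hsc).1 (h1 hat) ⟨B, hBc, hBsub, hBatt⟩
      · rintro a ⟨t, htc, hat⟩
        exact defense_mono (Set.subset_sUnion_of_mem htc) m n ((hcS htc).2 hat))
    E hE
  have hMadm : IsAdmissible att ℓ m n M := hMmax.1
  have hDM : IsAdmissible att ℓ m n (gradedDefense att m n M) := adm_defense hml hln hMadm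
  have hMeq : M = gradedDefense att m n M :=
    subset_antisymm hMadm.2 (hMmax.2 hDM hMadm.2)
  refine ⟨M, ⟨⟨hMadm.1, hMeq⟩, ?_⟩, hEM⟩
  intro P' hP' hMP'
  exact subset_antisymm hMP' (hMmax.2 ⟨hP'.1, hP'.2 ▸ Set.Subset.rfl⟩ hMP')

end Main

/-- Existence of preferred extensions: if `n ≥ ℓ ≥ m`, then every ℓmn-complete extension
is contained in some ⊆-maximal ℓmn-complete extension, and at least one ⊆-maximal
ℓmn-complete extension exists. -/
theorem exists_preferred_extension {A : Type*} [Nonempty A] (att : A → A → Prop)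
    (ℓ m n : ℕ) (hℓ : 0 < ℓ) (hm : 0 < m) (hn : 0 < n)
    (hml : m ≤ ℓ) (hln : ℓ ≤ n) :
    (∀ E : Set A, IsCompleteExt att ℓ m n E →
      ∃ P : Set A, (IsCompleteExt att ℓ m n P ∧
        ∀ P' : Set A, IsCompleteExt att ℓ m n P' → P ⊆ P' → P = P') ∧ E ⊆ P) ∧
    (∃ P : Set A, IsCompleteExt att ℓ m n P ∧
      ∀ P' : Set A, IsCompleteExt att ℓ m n P' → P ⊆ P' → P = P') := by
  constructor
  · intro E hE
    exact exists_max_adm hml hln ⟨hE.1, hE.2 ▸ Set.Subset.rfl⟩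
  · have hempty : IsAdmissible att ℓ m n (∅ : Set A) :=
      ⟨Set.empty_subset _, Set.empty_subset _⟩
    obtain ⟨P, hP, _⟩ := exists_max_adm hml hln hempty
    exact ⟨P, hP⟩
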